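/- (Lemma 7.) Let (Z_i)_{i≥1} be zero-mean square-integrable real random variables with 𝔼Z_i² ≤ b for some b > 0 and 𝔼[Z_i Z_j] = 0 for i ≠ j, and let Y₁,…,Y_k be zero-mean square-integrable random variables. Let P(Z_i | Y) denote the orthogonal projection in L² of Z_i onto the linear span of Y₁,…,Y_k. Then liminf_{n→∞} (1/n) Σ_{i=1}^n ( 𝔼(Z_i − P(Z_i | Y))² − 𝔼Z_i² ) ≥ 0. -/

import Mathlib

/-!
Pass to `L²(μ)`, with `z i` the class of `Z i` and `K` the span of the `Y j`, of dimension at most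
`k`. Minimality makes `P i` the orthogonal projection of `z i` onto `K`, so the `i`-th summand is
`-‖P_K z i‖²`. Expanding `‖P_K z i‖²` in an orthonormal basis `e` of `K` and applying Bessel's
inequality to the orthogonal family `z` (squared norms at most `b`) against each `e m` bounds
`∑_{i<n} ‖P_K z i‖²` by `b k` uniformly in `n`; hence the averages are at least `-b k / n → 0`.
-/

open MeasureTheory Filter
open scoped RealInnerProductSpace

section Projection

variable {𝕜 F : Type*} [RCLike 𝕜] [NormedAddCommGroup F] [InnerProductSpace 𝕜 F]

lemma Submodule.starProjection_eq_of_forall_norm_sub_le (K : Submodule 𝕜 F)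
    [K.HasOrthogonalProjection] {x p : F} (hp : p ∈ K) (hmin : ∀ w ∈ K, ‖x - p‖ ≤ ‖x - w‖) :
    K.starProjection x = p := by
  refine K.eq_starProjection_of_mem_of_inner_eq_zero hp
    ((K.norm_eq_iInf_iff_inner_eq_zero hp).1 (le_antisymm ?_ ?_))
  · exact le_ciInf fun w => hmin w w.2
  · exact ciInf_le (f := fun w : (K : Set F) => ‖x - w‖)
      ⟨0, Set.forall_mem_range.2 fun _ => norm_nonneg _⟩ ⟨p, hp⟩

lemma Submodule.norm_sub_starProjection_sq (K : Submodule 𝕜 F) [K.HasOrthogonalProjection]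
    (x : F) :
    ‖x - K.starProjection x‖ ^ 2 = ‖x‖ ^ 2 - ‖K.starProjection x‖ ^ 2 := by
  rw [K.norm_sq_eq_add_norm_sq_starProjection x, Submodule.starProjection_orthogonal_val]
  ring

end Projection

section Bessel

variable {E : Type*} [NormedAddCommGroup E] [InnerProductSpace ℝ E] {ι : Type*}
  {z : ι → E}

lemma inner_sum_smul_of_pairwise_inner_eq_zero (horth : Pairwise fun i j => ⟪z i, z j⟫ = 0)
    (c : ι → ℝ) {s : Finset ι} {j : ι} (hj : j ∈ s) :
    ⟪z j, ∑ i ∈ s, c i • z i⟫ = c j * ‖z j‖ ^ 2 := by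
  rw [inner_sum, Finset.sum_eq_single_of_mem j hj fun i _ hij => by
    rw [real_inner_smul_right, horth hij.symm, mul_zero]]
  rw [real_inner_smul_right, real_inner_self_eq_norm_sq]

lemma sum_inner_sq_le_of_pairwise_inner_eq_zero {b : ℝ} (hb : 0 ≤ b)
    (horth : Pairwise fun i j => ⟪z i, z j⟫ = 0) (hz : ∀ i, ‖z i‖ ^ 2 ≤ b)
    (s : Finset ι) (x : E) :
    ∑ i ∈ s, ⟪z i, x⟫ ^ 2 ≤ b * ‖x‖ ^ 2 := by
  set T := ∑ i ∈ s, ⟪z i, x⟫ ^ 2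
  -- `⟪v, x⟫ = T` and `‖v‖² ≤ b T`, so Cauchy–Schwarz gives `T² ≤ b T ‖x‖²`.
  set v := ∑ i ∈ s, ⟪z i, x⟫ • z i
  have hvx : ⟪v, x⟫ = T := by
    simp only [v, T, sum_inner, real_inner_smul_left, sq]
  have hvv : ‖v‖ ^ 2 ≤ b * T := by
    calc ‖v‖ ^ 2 = ∑ i ∈ s, ⟪z i, x⟫ ^ 2 * ‖z i‖ ^ 2 := by
          rw [← real_inner_self_eq_norm_sq]
          change ⟪∑ i ∈ s, ⟪z i, x⟫ • z i, v⟫ = _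
          rw [sum_inner]
          refine Finset.sum_congr rfl fun i hi => ?_
          rw [real_inner_smul_left, inner_sum_smul_of_pairwise_inner_eq_zero horth _ hi]
          ring
      _ ≤ ∑ i ∈ s, ⟪z i, x⟫ ^ 2 * b :=
          Finset.sum_le_sum fun i _ => mul_le_mul_of_nonneg_left (hz i) (sq_nonneg _)
      _ = b * T := by rw [← Finset.sum_mul, mul_comm]
  have hcs : T * T ≤ T * (b * ‖x‖ ^ 2) := by
    calc T * T = ⟪v, x⟫ * ⟪v, x⟫ := by rw [hvx]
      _ ≤ ‖v‖ ^ 2 * ‖x‖ ^ 2 := by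
          rw [← real_inner_self_eq_norm_sq, ← real_inner_self_eq_norm_sq]
          exact real_inner_mul_inner_self_le v x
      _ ≤ b * T * ‖x‖ ^ 2 := mul_le_mul_of_nonneg_right hvv (sq_nonneg _)
      _ = T * (b * ‖x‖ ^ 2) := by ring
  obtain hT | hT := (Finset.sum_nonneg fun i _ => sq_nonneg ⟪z i, x⟫ : 0 ≤ T).eq_or_lt
  · rw [show T = 0 from hT.symm]; positivity
  · exact le_of_mul_le_mul_left hcs hT

lemma Submodule.norm_starProjection_sq_eq_sum_inner_sq {κ : Type*} [Fintype κ]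
    (K : Submodule ℝ E) [K.HasOrthogonalProjection] (e : OrthonormalBasis κ ℝ K) (x : E) :
    ‖K.starProjection x‖ ^ 2 = ∑ m, ⟪(e m : E), x⟫ ^ 2 := by
  rw [K.starProjection_apply, Submodule.norm_coe, ← e.sum_sq_inner_right]
  simp only [Submodule.inner_orthogonalProjectionOnto_eq_of_mem_left]

lemma sum_norm_starProjection_sq_le_of_pairwise_inner_eq_zero (K : Submodule ℝ E)
    [FiniteDimensional ℝ K] {b : ℝ} (hb : 0 ≤ b)
    (horth : Pairwise fun i j => ⟪z i, z j⟫ = 0) (hz : ∀ i, ‖z i‖ ^ 2 ≤ b) (s : Finset ι) :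
    ∑ i ∈ s, ‖K.starProjection (z i)‖ ^ 2 ≤ b * Module.finrank ℝ K := by
  let e := stdOrthonormalBasis ℝ K
  calc ∑ i ∈ s, ‖K.starProjection (z i)‖ ^ 2
      = ∑ m, ∑ i ∈ s, ⟪z i, (e m : E)⟫ ^ 2 := by
        simp only [K.norm_starProjection_sq_eq_sum_inner_sq e, real_inner_comm (e _ : E)]
        exact Finset.sum_comm
    _ ≤ ∑ m, b * ‖(e m : E)‖ ^ 2 :=
        Finset.sum_le_sum fun m _ => sum_inner_sq_le_of_pairwise_inner_eq_zero hb horth hz s _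
    _ = b * Module.finrank ℝ K := by
        simp [Submodule.norm_coe, e.orthonormal.1, mul_comm]

end Bessel

section L2

variable {Ω : Type*} [MeasurableSpace Ω] {μ : Measure Ω}

lemma integral_mul_eq_inner_of_ae_eq {F G : Lp ℝ 2 μ} {f g : Ω → ℝ} (hF : F =ᵐ[μ] f)
    (hG : G =ᵐ[μ] g) : ∫ ω, f ω * g ω ∂μ = ⟪F, G⟫ := by
  rw [MeasureTheory.L2.inner_def]
  refine integral_congr_ae ?_
  filter_upwards [hF, hG] with ω hFω hGω
  simp [hFω, hGω, mul_comm]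

lemma integral_sq_eq_norm_sq_of_ae_eq {F : Lp ℝ 2 μ} {f : Ω → ℝ} (hF : F =ᵐ[μ] f) :
    ∫ ω, f ω ^ 2 ∂μ = ‖F‖ ^ 2 := by
  rw [← real_inner_self_eq_norm_sq, ← integral_mul_eq_inner_of_ae_eq hF hF]
  simp only [sq]

lemma MeasureTheory.Lp.coeFn_sum_smul_ae_eq {ι : Type*} [Fintype ι] {y : ι → Lp ℝ 2 μ}
    {Y : ι → Ω → ℝ} (hY : ∀ j, y j =ᵐ[μ] Y j) (c : ι → ℝ) :
    ⇑(∑ j, c j • y j) =ᵐ[μ] fun ω => ∑ j, c j * Y j ω := by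
  have hsmul : ∀ᵐ ω ∂μ, ∀ j, (c j • y j) ω = c j * Y j ω := by
    refine eventually_all.2 fun j => ?_
    filter_upwards [Lp.coeFn_smul (c j) (y j), hY j] with ω h₁ h₂
    simp [h₁, h₂]
  filter_upwards [Lp.coeFn_fun_finsetSum Finset.univ fun j => c j • y j, hsmul] with ω h₁ h₂
  simp only [h₁, h₂]

end L2

lemma zero_le_liminf_inv_mul_sum {a : ℕ → ℝ} {C : ℝ} (ha : ∀ i, a i ≤ 0)
    (hsum : ∀ n, -C ≤ ∑ i ∈ Finset.range n, a i) :
    0 ≤ liminf (fun n : ℕ => (n : ℝ)⁻¹ * ∑ i ∈ Finset.range n, a i) atTop := by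
  have hlim : Tendsto (fun n : ℕ => (n : ℝ)⁻¹ * -C) atTop (nhds 0) := by
    simpa using tendsto_inv_atTop_nhds_zero_nat.mul_const (-C)
  rw [← hlim.liminf_eq]
  refine liminf_le_liminf (Eventually.of_forall fun n => ?_) hlim.isBoundedUnder_ge ?_
  · exact mul_le_mul_of_nonneg_left (hsum n) (by positivity)
  · refine isCoboundedUnder_ge_of_le atTop (x := 0) fun n => ?_
    exact mul_nonpos_of_nonneg_of_nonpos (by positivity) (Finset.sum_nonpos fun i _ => ha i)

theorem stmt11 {Ω : Type*} [MeasurableSpace Ω] (μ : Measure Ω)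
    (b : ℝ) (hb : 0 < b) (k : ℕ) (Z : ℕ → Ω → ℝ) (Y : Fin k → Ω → ℝ)
    (hZ : ∀ i, MemLp (Z i) 2 μ) (hY : ∀ j, MemLp (Y j) 2 μ)
    (hZb : ∀ i, ∫ ω, Z i ω ^ 2 ∂μ ≤ b)
    (horth : ∀ i j, i ≠ j → ∫ ω, Z i ω * Z j ω ∂μ = 0)
    (P : ℕ → Ω → ℝ)
    (hPspan : ∀ i, ∃ c : Fin k → ℝ, P i = fun ω => ∑ j, c j * Y j ω)
    (hPmin : ∀ i (c : Fin k → ℝ),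
      ∫ ω, (Z i ω - P i ω) ^ 2 ∂μ ≤ ∫ ω, (Z i ω - ∑ j, c j * Y j ω) ^ 2 ∂μ) :
    0 ≤ liminf (fun n : ℕ => (n : ℝ)⁻¹ * ∑ i ∈ Finset.range n,
        ((∫ ω, (Z i ω - P i ω) ^ 2 ∂μ) - ∫ ω, Z i ω ^ 2 ∂μ)) atTop := by
  let z i := (hZ i).toLp (Z i)
  let y j := (hY j).toLp (Y j)
  let K := Submodule.span ℝ (Set.range y)
  have : FiniteDimensional ℝ K := .span_of_finite ℝ (Set.finite_range y)
  have hz i : z i =ᵐ[μ] Z i := (hZ i).coeFn_toLp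
  have hdist i (c : Fin k → ℝ) :
      ∫ ω, (Z i ω - ∑ j, c j * Y j ω) ^ 2 ∂μ = ‖z i - ∑ j, c j • y j‖ ^ 2 :=
    integral_sq_eq_norm_sq_of_ae_eq <| (Lp.coeFn_sub _ _).trans <|
      (hz i).sub (Lp.coeFn_sum_smul_ae_eq (fun j => (hY j).coeFn_toLp) c)
  choose c hc using hPspan
  have hproj i : K.starProjection (z i) = ∑ j, c i j • y j := by
    refine K.starProjection_eq_of_forall_norm_sub_le
      ((Submodule.mem_span_range_iff_exists_fun ℝ).2 ⟨c i, rfl⟩) fun w hw => ?_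
    obtain ⟨d, rfl⟩ := (Submodule.mem_span_range_iff_exists_fun ℝ).1 hw
    have hle := hPmin i d
    rw [hc i, hdist, hdist] at hle
    exact (sq_le_sq₀ (norm_nonneg _) (norm_nonneg _)).1 hle
  have hterm i : (∫ ω, (Z i ω - P i ω) ^ 2 ∂μ) - ∫ ω, Z i ω ^ 2 ∂μ
      = -‖K.starProjection (z i)‖ ^ 2 := by
    rw [hc i, hdist, ← hproj, integral_sq_eq_norm_sq_of_ae_eq (hz i),
      K.norm_sub_starProjection_sq]
    ring
  have hzorth : Pairwise fun i j => ⟪z i, z j⟫ = 0 := fun i j hij => by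
    dsimp only
    rw [← integral_mul_eq_inner_of_ae_eq (hz i) (hz j), horth i j hij]
  have hzb i : ‖z i‖ ^ 2 ≤ b := by
    rw [← integral_sq_eq_norm_sq_of_ae_eq (hz i)]
    exact hZb i
  refine zero_le_liminf_inv_mul_sum (C := b * k)
    (fun i => by rw [hterm]; exact neg_nonpos.2 (sq_nonneg _)) fun n => ?_
  simp only [hterm, Finset.sum_neg_distrib, neg_le_neg_iff]
  calc ∑ i ∈ Finset.range n, ‖K.starProjection (z i)‖ ^ 2 ≤ b * Module.finrank ℝ K :=
        sum_norm_starProjection_sq_le_of_pairwise_inner_eq_zero K hb.le hzorth hzb _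
    _ ≤ b * k := by
        gcongr
        exact_mod_cast (finrank_range_le_card y).trans (Fintype.card_fin k).le
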